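/- arXiv:2002.02911 — 4 statements merged into one kernel-verified Lean document; each statement's English description precedes it below -/
import Mathlib

section
/- For every positive integer d and every real k with k > 2πd, ∫₀¹ (1 - cos(2πℓ))^d e^{ikℓ} dℓ = ((-1)^d (2d)! / (2^d π ∏_{j=-d}^{d} (k/(2π) + j))) · e^{ik/2} sin(k/2). -/
open Real Complex

/-!
Since `1 - cos θ = -½ e^{-iθ} (e^{iθ} - 1)²`, writing `k = 2π(y + d)` and expanding binomially turns
the integrand into a combination of the exponentials `e^{2πi(y+m)ℓ}`, `0 ≤ m ≤ 2d`, which all take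
the value `e^{ik}` at `ℓ = 1`. Integrating gives `(e^{ik} - 1)/(2πi)` times
`∑ (-1)^m C(2d,m)/(y+m)`, the `2d`-th forward difference of `x⁻¹` at `y`, which is
`(2d)!/∏_{m=0}^{2d} (y+m)`; shifting `m = j + d` gives the product in the statement, and
`e^{ik} - 1 = 2i e^{ik/2} sin(k/2)`.
-/

open Finset

section PartialFractions

variable {K : Type*} [Field K]

theorem fwdDiff_iter_inv (n : ℕ) (y : K) (hy : ∀ m ≤ n, y + m ≠ 0) :
    (fwdDiff 1)^[n] (·⁻¹) y = (-1) ^ n * n.factorial / ∏ m ∈ range (n + 1), (y + m) := by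
  induction n generalizing y with
  | zero => simp
  | succ n ih =>
    have hshift : ∀ m ≤ n, y + 1 + m ≠ 0 := fun m hm => by
      simpa [add_assoc, add_comm (1 : K)] using hy (m + 1) (by omega)
    have hP : ∏ m ∈ range (n + 1), (y + m) ≠ 0 :=
      prod_ne_zero_iff.mpr fun m hm => hy m (by simp at hm; omega)
    have hP' : ∏ m ∈ range (n + 1), (y + 1 + m) ≠ 0 :=
      prod_ne_zero_iff.mpr fun m hm => hshift m (by simp at hm; omega)
    have hyn : y + (n + 1 : ℕ) ≠ 0 := hy (n + 1) le_rfl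
    have hfirst : ∏ m ∈ range (n + 2), (y + m) = y * ∏ m ∈ range (n + 1), (y + 1 + m) := by
      rw [prod_range_succ', mul_comm]
      simp [add_assoc, add_comm (1 : K)]
    have hlast :
        ∏ m ∈ range (n + 2), (y + m) = (∏ m ∈ range (n + 1), (y + m)) * (y + (n + 1 : ℕ)) :=
      prod_range_succ _ _
    rw [Function.iterate_succ_apply', fwdDiff, ih y fun m hm => hy m (by omega),
      ih (y + 1) hshift, div_sub_div _ _ hP' hP,
      div_eq_div_iff (mul_ne_zero hP' hP) (hlast ▸ mul_ne_zero hP hyn), Nat.factorial_succ]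
    push_cast at hlast ⊢
    linear_combination ((-1) ^ n * n.factorial * ∏ m ∈ range (n + 1), (y + m)) * hfirst
      - ((-1) ^ n * n.factorial * ∏ m ∈ range (n + 1), (y + 1 + m)) * hlast

theorem sum_range_choose_mul_inv_add (n : ℕ) (y : K) (hy : ∀ m ≤ n, y + m ≠ 0) :
    ∑ m ∈ range (n + 1), (-1) ^ (n - m) * n.choose m * (y + m)⁻¹
      = (-1) ^ n * n.factorial / ∏ m ∈ range (n + 1), (y + m) := by
  rw [← fwdDiff_iter_inv n y hy, fwdDiff_iter_eq_sum_shift]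
  simp [zsmul_eq_mul]

end PartialFractions

theorem prod_Icc_neg_eq_prod_range {M : Type*} [CommMonoid M] (d : ℕ) (f : ℤ → M) :
    ∏ j ∈ Icc (-(d : ℤ)) d, f j = ∏ m ∈ range (2 * d + 1), f (m - d) := by
  symm
  refine prod_nbij' (fun m => (m : ℤ) - d) (fun j => (j + d).toNat) ?_ ?_ ?_ ?_ ?_ <;>
    intro a ha <;> simp only [mem_Icc, mem_range] at ha ⊢ <;> omega

namespace Complex

theorem one_sub_cos_eq_mul_exp_sub_one_sq (z : ℂ) :
    1 - cos z = -(1 / 2) * exp (-z * I) * (exp (z * I) - 1) ^ 2 := by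
  have h : exp (-z * I) * exp (z * I) = 1 := by rw [← exp_add]; simp
  rw [cos]
  linear_combination (exp (z * I) / 2 - 1) * h

theorem exp_mul_I_sub_one (z : ℂ) :
    exp (z * I) - 1 = 2 * I * exp (z / 2 * I) * sin (z / 2) := by
  have h : exp (-(z / 2) * I) * exp (z / 2 * I) = 1 := by rw [← exp_add]; simp
  have h2 : exp (z / 2 * I) * exp (z / 2 * I) = exp (z * I) := by rw [← exp_add]; ring_nf
  rw [sin]
  linear_combination h - h2 + (exp (z / 2 * I) ^ 2 - exp (-(z / 2) * I) * exp (z / 2 * I)) * I_sq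

theorem exp_add_nat_mul_two_pi_mul_I (y : ℂ) (n : ℕ) :
    exp ((y + n) * (2 * π) * I) = exp (y * (2 * π) * I) := by
  rw [add_mul, add_mul, exp_add, mul_assoc (n : ℂ), exp_nat_mul_two_pi_mul_I, mul_one]

end Complex

theorem one_sub_cos_pow_mul_exp_eq_sum (d : ℕ) (y θ : ℂ) :
    (1 - Complex.cos θ) ^ d * cexp ((y + d) * θ * I)
      = (-(1 / 2)) ^ d * ∑ m ∈ range (2 * d + 1),
          (-1 : ℂ) ^ (2 * d - m) * (2 * d).choose m * cexp ((y + m) * θ * I) := by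
  rw [one_sub_cos_eq_mul_exp_sub_one_sq, mul_pow, mul_pow, ← pow_mul, sub_eq_add_neg, add_pow]
  simp only [mul_sum, sum_mul]
  refine sum_congr rfl fun m _ => ?_
  have : cexp (-θ * I) ^ d * cexp ((y + d) * θ * I) * cexp (θ * I) ^ m
      = cexp ((y + m) * θ * I) := by
    rw [← Complex.exp_nat_mul, ← Complex.exp_nat_mul, ← Complex.exp_add, ← Complex.exp_add]
    ring_nf
  rw [← this]
  ring

theorem integral_exp_add_nat_mul_two_pi (y : ℂ) (m : ℕ) (hm : y + m ≠ 0) :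
    ∫ ℓ in (0 : ℝ)..1, cexp ((y + m) * (2 * π * ℓ) * I)
      = (cexp (y * (2 * π) * I) - 1) / (2 * π * I) * (y + m)⁻¹ := by
  have hc : (y + m) * (2 * π * I) ≠ 0 := by simp [hm, pi_ne_zero, I_ne_zero]
  have hperiod : cexp ((y + m) * (2 * π * I) * (1 : ℝ)) = cexp (y * (2 * π) * I) := by
    rw [ofReal_one, mul_one, ← mul_assoc, exp_add_nat_mul_two_pi_mul_I]
  simp_rw [show ∀ ℓ : ℝ, (y + m) * (2 * π * ℓ) * I = (y + m) * (2 * π * I) * ℓ from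
    fun ℓ => by ring]
  rw [integral_exp_mul_complex hc, hperiod, ofReal_zero, mul_zero, Complex.exp_zero]
  field_simp

theorem integral_one_sub_cos_pow_mul_exp (d : ℕ) (y : ℂ) (hy : ∀ m ≤ 2 * d, y + m ≠ 0) :
    ∫ ℓ in (0 : ℝ)..1, (1 - Complex.cos (2 * π * ℓ)) ^ d * cexp ((y + d) * (2 * π * ℓ) * I)
      = (-(1 / 2)) ^ d * (cexp (y * (2 * π) * I) - 1) / (2 * π * I)
          * ((2 * d).factorial / ∏ m ∈ range (2 * d + 1), (y + m)) := by
  simp_rw [one_sub_cos_pow_mul_exp_eq_sum]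
  rw [intervalIntegral.integral_const_mul, intervalIntegral.integral_finsetSum
    fun m _ => by apply Continuous.intervalIntegrable; fun_prop]
  simp_rw [intervalIntegral.integral_const_mul]
  rw [sum_congr rfl fun m hm => by
      rw [integral_exp_add_nat_mul_two_pi y m (hy m (by simp at hm; omega)), mul_left_comm],
    ← mul_sum, sum_range_choose_mul_inv_add (2 * d) y hy, pow_mul, neg_one_sq, one_pow]
  ring

theorem fourier_transform_of_power_general (d : ℕ) (k : ℝ) (hk : k > 2 * π * d) :
    ∫ ℓ in (0:ℝ)..1, ((1 - Real.cos (2 * π * ℓ) : ℝ) : ℂ) ^ d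
        * Complex.exp (Complex.I * k * ℓ)
      = (((-1 : ℝ) ^ d * ((2 * d).factorial : ℝ)
            / (2 ^ d * π * ∏ j ∈ Finset.Icc (-(d : ℤ)) (d : ℤ), (k / (2 * π) + (j : ℝ))) : ℝ) : ℂ)
          * Complex.exp (Complex.I * k / 2) * Complex.sin (k / 2) := by
  set y : ℝ := k / (2 * π) - d with hy_def
  have hy_pos : 0 < y := by rw [hy_def, sub_pos, lt_div_iff₀ (by positivity)]; linarith
  have hk_eq : (k : ℂ) = 2 * π * (y + d) := by rw [hy_def]; push_cast; field_simp; ring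
  have hy : ∀ m ≤ 2 * d, (y : ℂ) + m ≠ 0 := fun m _ => by
    exact_mod_cast (by positivity : (0 : ℝ) < y + m).ne'
  have hprod : ∏ m ∈ range (2 * d + 1), ((y : ℂ) + m)
      = ((∏ j ∈ Icc (-(d : ℤ)) d, (k / (2 * π) + j) : ℝ) : ℂ) := by
    rw [prod_Icc_neg_eq_prod_range, ofReal_prod]
    refine prod_congr rfl fun m _ => ?_
    push_cast [hy_def]
    ring
  have hQ : ∏ j ∈ Icc (-(d : ℤ)) d, (k / (2 * π) + j) ≠ 0 := by
    rw [← ofReal_ne_zero, ← hprod, prod_ne_zero_iff]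
    exact fun m hm => hy m (by simp at hm; omega)
  have hintegrand : ∀ ℓ : ℝ, ((1 - Real.cos (2 * π * ℓ) : ℝ) : ℂ) ^ d * cexp (I * k * ℓ)
      = (1 - Complex.cos (2 * π * ℓ)) ^ d * cexp ((y + d) * (2 * π * ℓ) * I) := fun ℓ => by
    push_cast
    rw [hk_eq]
    ring_nf
  have hexp : cexp ((y : ℂ) * (2 * π) * I) = cexp (k * I) := by
    rw [hk_eq, mul_comm _ ((y : ℂ) + d), exp_add_nat_mul_two_pi_mul_I]
  simp_rw [hintegrand]
  rw [integral_one_sub_cos_pow_mul_exp d y hy, hexp, exp_mul_I_sub_one, hprod,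
    show (k : ℂ) / 2 * I = I * k / 2 by ring]
  generalize ∏ j ∈ Icc (-(d : ℤ)) d, (k / (2 * π) + j) = Q at hQ ⊢
  push_cast
  rw [neg_div', div_pow]
  field_simp

theorem fourier_transform_of_power (d : ℕ) (hd : 0 < d) (k : ℝ) (hk : k > 2 * π * d) :
    ∫ ℓ in (0:ℝ)..1, ((1 - Real.cos (2 * π * ℓ) : ℝ) : ℂ) ^ d
        * Complex.exp (Complex.I * k * ℓ)
      = (((-1 : ℝ) ^ d * ((2 * d).factorial : ℝ)
            / (2 ^ d * π * ∏ j ∈ Finset.Icc (-(d : ℤ)) (d : ℤ), (k / (2 * π) + (j : ℝ))) : ℝ) : ℂ)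
          * Complex.exp (Complex.I * k / 2) * Complex.sin (k / 2) :=
  fourier_transform_of_power_general d k hk
end

section
/- The real part of the Fourier transform of φ_d satisfies Re(φ̂_d(k)) = ((-1)^d (d!)^2 sin k) / (2π ∏_{j=-d}^{d} (k/(2π)+j)) for all real k that are not of the form 2πm with |m| ≤ d. -/
open Real
set_option maxHeartbeats 2000000

theorem aux_phi (d : ℕ) : ∀ k : ℝ, (∀ m : ℤ, |m| ≤ (d : ℤ) → k ≠ 2 * π * m) →
    (∫ ℓ in (0:ℝ)..1,
        (2 ^ d * (d.factorial : ℝ) ^ 2 / ((2 * d).factorial : ℝ))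
          * (1 - Real.cos (2 * π * ℓ)) ^ d * Real.cos (k * ℓ))
      = ((-1 : ℝ) ^ d * (d.factorial : ℝ) ^ 2 * Real.sin k)
          / (2 * π * ∏ j ∈ Finset.Icc (-(d : ℤ)) (d : ℤ), (k / (2 * π) + (j : ℝ))) := by
  induction d with
  | zero =>
    intro k hk
    have hk0 : k ≠ 0 := by simpa using hk 0 (by norm_num)
    have e : Set.EqOn
        (fun ℓ : ℝ => (2 ^ 0 * ((Nat.factorial 0 : ℕ) : ℝ) ^ 2 / (((2 * 0).factorial : ℕ) : ℝ))
          * (1 - Real.cos (2 * π * ℓ)) ^ 0 * Real.cos (k * ℓ))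
        (fun ℓ : ℝ => Real.cos (k * ℓ)) (Set.uIcc 0 1) := by
      intro ℓ _; norm_num [Nat.factorial]
    rw [intervalIntegral.integral_congr e]
    rw [intervalIntegral.integral_comp_mul_left (fun x => Real.cos x) hk0]
    simp only [integral_cos, mul_one, mul_zero, Real.sin_zero, sub_zero, smul_eq_mul]
    simp only [Nat.cast_zero, neg_zero, Finset.Icc_self, Finset.prod_singleton,
      Int.cast_zero, add_zero, Nat.factorial_zero, Nat.cast_one, pow_zero, one_mul]
    have hπ : π ≠ 0 := Real.pi_ne_zero
    field_simp
  | succ n ih =>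
    intro k hk
    have hπ : π ≠ 0 := Real.pi_ne_zero
    have h2π : (2:ℝ) * π ≠ 0 := by positivity
    -- nonvanishing of the linear factors
    have hne : ∀ j : ℤ, |j| ≤ (n:ℤ) + 1 → k / (2*π) + (j:ℝ) ≠ 0 := by
      intro j hj h
      refine hk (-j) (by rw [abs_le] at hj ⊢; push_cast; omega) ?_
      push_cast
      have hkval : k = -(2*π*(j:ℝ)) := by
        field_simp at h
        linarith
      linarith [hkval]
    have hA : k / (2*π) - ((n:ℝ)+1) ≠ 0 := by
      have h := hne (-(n:ℤ)-1) (by rw [abs_le]; omega)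
      push_cast at h
      intro h0; exact h (by linarith)
    have hB : k / (2*π) + ((n:ℝ)+1) ≠ 0 := by
      have h := hne ((n:ℤ)+1) (by rw [abs_le]; omega)
      push_cast at h
      intro h0; exact h (by linarith)
    have hC : k / (2*π) - (n:ℝ) ≠ 0 := by
      have h := hne (-(n:ℤ)) (by rw [abs_le]; omega)
      push_cast at h
      intro h0; exact h (by linarith)
    have hD : k / (2*π) + (n:ℝ) ≠ 0 := by
      have h := hne ((n:ℤ)) (by rw [abs_le]; omega)
      push_cast at h
      intro h0; exact h (by linarith)
    have hP : (∏ j ∈ Finset.Icc (-(n:ℤ)) (n:ℤ), (k / (2*π) + (j:ℝ))) ≠ 0 := by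
      refine Finset.prod_ne_zero_iff.mpr fun j hj => ?_
      rw [Finset.mem_Icc] at hj
      exact hne j (by rw [abs_le]; omega)
    -- hypotheses for the inductive steps
    have hk0 : ∀ m : ℤ, |m| ≤ (n:ℤ) → k ≠ 2 * π * m := fun m hm =>
      hk m (by push_cast; omega)
    have hkp : ∀ m : ℤ, |m| ≤ (n:ℤ) → k + 2*π ≠ 2 * π * m := by
      intro m hm h
      refine hk (m-1) (by rw [abs_le] at hm ⊢; push_cast; omega) ?_
      push_cast
      linear_combination h
    have hkm : ∀ m : ℤ, |m| ≤ (n:ℤ) → k - 2*π ≠ 2 * π * m := by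
      intro m hm h
      refine hk (m+1) (by rw [abs_le] at hm ⊢; push_cast; omega) ?_
      push_cast
      linear_combination h
    have I0 := ih k hk0
    have Ip := ih (k + 2*π) hkp
    have Im := ih (k - 2*π) hkm
    rw [Real.sin_add_two_pi] at Ip
    rw [Real.sin_sub_two_pi] at Im
    have hdivp : (k + 2*π)/(2*π) = k/(2*π) + 1 := by field_simp
    have hdivm : (k - 2*π)/(2*π) = k/(2*π) + -1 := by field_simp; ring
    simp only [hdivp] at Ip
    simp only [hdivm] at Im
    -- product identities
    have shift1 : (∏ j ∈ Finset.Icc (-(n:ℤ)) (n:ℤ), (k / (2*π) + 1 + (j:ℝ)))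
        = ∏ j ∈ Finset.Icc (-(n:ℤ)+1) ((n:ℤ)+1), (k/(2*π) + (j:ℝ)) := by
      rw [← Finset.map_add_right_Icc, Finset.prod_map]
      refine Finset.prod_congr rfl fun j hj => ?_
      simp only [addRightEmbedding_apply]
      push_cast; ring
    have shift2 : (∏ j ∈ Finset.Icc (-(n:ℤ)) (n:ℤ), (k / (2*π) + -1 + (j:ℝ)))
        = ∏ j ∈ Finset.Icc (-(n:ℤ)+ -1) ((n:ℤ)+ -1), (k/(2*π) + (j:ℝ)) := by
      rw [← Finset.map_add_right_Icc, Finset.prod_map]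
      refine Finset.prod_congr rfl fun j hj => ?_
      simp only [addRightEmbedding_apply]
      push_cast; ring
    have hp : (k/(2*π) - (n:ℝ)) * (∏ j ∈ Finset.Icc (-(n:ℤ)) (n:ℤ), (k / (2*π) + 1 + (j:ℝ)))
        = (k/(2*π) + (n:ℝ) + 1) * (∏ j ∈ Finset.Icc (-(n:ℤ)) (n:ℤ), (k / (2*π) + (j:ℝ))) := by
      rw [shift1]
      trans (∏ j ∈ Finset.Icc (-(n:ℤ)) ((n:ℤ)+1), (k/(2*π) + (j:ℝ)))
      · have e : Finset.Icc (-(n:ℤ)) ((n:ℤ)+1) = insert (-(n:ℤ)) (Finset.Icc (-(n:ℤ)+1) ((n:ℤ)+1)) := by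
          ext j; simp only [Finset.mem_Icc, Finset.mem_insert]; omega
        rw [e, Finset.prod_insert (by simp only [Finset.mem_Icc]; omega)]
        push_cast; ring
      · have e : Finset.Icc (-(n:ℤ)) ((n:ℤ)+1) = insert ((n:ℤ)+1) (Finset.Icc (-(n:ℤ)) (n:ℤ)) := by
          ext j; simp only [Finset.mem_Icc, Finset.mem_insert]; omega
        rw [e, Finset.prod_insert (by simp only [Finset.mem_Icc]; omega)]
        push_cast; ring
    have hm2 : (k/(2*π) + (n:ℝ)) * (∏ j ∈ Finset.Icc (-(n:ℤ)) (n:ℤ), (k / (2*π) + -1 + (j:ℝ)))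
        = (k/(2*π) - (n:ℝ) - 1) * (∏ j ∈ Finset.Icc (-(n:ℤ)) (n:ℤ), (k / (2*π) + (j:ℝ))) := by
      rw [shift2]
      trans (∏ j ∈ Finset.Icc (-(n:ℤ)+ -1) ((n:ℤ)), (k/(2*π) + (j:ℝ)))
      · have e : Finset.Icc (-(n:ℤ)+ -1) ((n:ℤ)) = insert ((n:ℤ)) (Finset.Icc (-(n:ℤ)+ -1) ((n:ℤ)+ -1)) := by
          ext j; simp only [Finset.mem_Icc, Finset.mem_insert]; omega
        rw [e, Finset.prod_insert (by simp only [Finset.mem_Icc]; omega)]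
        push_cast; ring
      · have e : Finset.Icc (-(n:ℤ)+ -1) ((n:ℤ)) = insert (-(n:ℤ)+ -1) (Finset.Icc (-(n:ℤ)) (n:ℤ)) := by
          ext j; simp only [Finset.mem_Icc, Finset.mem_insert]; omega
        rw [e, Finset.prod_insert (by simp only [Finset.mem_Icc]; omega)]
        push_cast; ring
    have hQ : (∏ j ∈ Finset.Icc (-((n:ℤ)+1)) ((n:ℤ)+1), (k/(2*π) + (j:ℝ)))
        = (k/(2*π) - ((n:ℝ)+1)) * ((k/(2*π) + ((n:ℝ)+1)) * (∏ j ∈ Finset.Icc (-(n:ℤ)) (n:ℤ), (k / (2*π) + (j:ℝ)))) := by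
      have e : Finset.Icc (-((n:ℤ)+1)) ((n:ℤ)+1)
          = insert (-((n:ℤ)+1)) (insert ((n:ℤ)+1) (Finset.Icc (-(n:ℤ)) (n:ℤ))) := by
        ext j; simp only [Finset.mem_Icc, Finset.mem_insert]; omega
      rw [e, Finset.prod_insert (by simp only [Finset.mem_insert, Finset.mem_Icc]; omega),
          Finset.prod_insert (by simp only [Finset.mem_Icc]; omega)]
      push_cast; ring
    -- pointwise identity for the integrand
    have hcongr : Set.EqOn
        (fun ℓ : ℝ => (2 ^ (n+1) * ((n+1).factorial : ℝ) ^ 2 / ((2 * (n+1)).factorial : ℝ))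
          * (1 - Real.cos (2 * π * ℓ)) ^ (n+1) * Real.cos (k * ℓ))
        (fun ℓ : ℝ => (((n:ℝ)+1)/(2*(n:ℝ)+1)) * ((2 ^ n * (n.factorial : ℝ) ^ 2 / ((2 * n).factorial : ℝ)) * (1 - Real.cos (2 * π * ℓ)) ^ n * Real.cos (k * ℓ))
          - (((n:ℝ)+1)/(2*(2*(n:ℝ)+1))) * ((2 ^ n * (n.factorial : ℝ) ^ 2 / ((2 * n).factorial : ℝ)) * (1 - Real.cos (2 * π * ℓ)) ^ n * Real.cos ((k + 2*π) * ℓ))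
          - (((n:ℝ)+1)/(2*(2*(n:ℝ)+1))) * ((2 ^ n * (n.factorial : ℝ) ^ 2 / ((2 * n).factorial : ℝ)) * (1 - Real.cos (2 * π * ℓ)) ^ n * Real.cos ((k - 2*π) * ℓ))) (Set.uIcc 0 1) := by
      intro ℓ _
      simp only
      rw [show (k + 2*π)*ℓ = k*ℓ + 2*π*ℓ by ring, show (k - 2*π)*ℓ = k*ℓ - 2*π*ℓ by ring,
        Real.cos_add, Real.cos_sub]
      have hf1 : ((n+1).factorial : ℝ) = ((n:ℝ)+1) * (n.factorial : ℝ) := by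
        rw [Nat.factorial_succ]; push_cast; ring
      have hf2 : ((2*(n+1)).factorial : ℝ) = (2*(n:ℝ)+2) * ((2*(n:ℝ)+1) * ((2*n).factorial : ℝ)) := by
        have h : 2*(n+1) = (2*n+1)+1 := by ring
        rw [h, Nat.factorial_succ, Nat.factorial_succ]; push_cast; ring
      have hfac : ((2*n).factorial : ℝ) ≠ 0 := Nat.cast_ne_zero.mpr (Nat.factorial_ne_zero _)
      have h2n1 : (2*(n:ℝ)+1) ≠ 0 := by positivity
      have hn1 : ((n:ℝ)+1) ≠ 0 := by positivity
      rw [hf1, hf2, pow_succ, pow_succ]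
      field_simp
      ring
    have hint : ∀ c : ℝ, IntervalIntegrable (fun ℓ : ℝ => (2 ^ n * (n.factorial : ℝ) ^ 2 / ((2 * n).factorial : ℝ)) * (1 - Real.cos (2 * π * ℓ)) ^ n * Real.cos (c * ℓ))
        MeasureTheory.volume 0 1 := fun c => Continuous.intervalIntegrable (by fun_prop) 0 1
    have split : (∫ ℓ in (0:ℝ)..1, ((((n:ℝ)+1)/(2*(n:ℝ)+1)) * ((2 ^ n * (n.factorial : ℝ) ^ 2 / ((2 * n).factorial : ℝ)) * (1 - Real.cos (2 * π * ℓ)) ^ n * Real.cos (k * ℓ))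
          - (((n:ℝ)+1)/(2*(2*(n:ℝ)+1))) * ((2 ^ n * (n.factorial : ℝ) ^ 2 / ((2 * n).factorial : ℝ)) * (1 - Real.cos (2 * π * ℓ)) ^ n * Real.cos ((k + 2*π) * ℓ))
          - (((n:ℝ)+1)/(2*(2*(n:ℝ)+1))) * ((2 ^ n * (n.factorial : ℝ) ^ 2 / ((2 * n).factorial : ℝ)) * (1 - Real.cos (2 * π * ℓ)) ^ n * Real.cos ((k - 2*π) * ℓ))))
        = (((n:ℝ)+1)/(2*(n:ℝ)+1)) * (∫ ℓ in (0:ℝ)..1, (2 ^ n * (n.factorial : ℝ) ^ 2 / ((2 * n).factorial : ℝ)) * (1 - Real.cos (2 * π * ℓ)) ^ n * Real.cos (k * ℓ))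
          - (((n:ℝ)+1)/(2*(2*(n:ℝ)+1))) * (∫ ℓ in (0:ℝ)..1, (2 ^ n * (n.factorial : ℝ) ^ 2 / ((2 * n).factorial : ℝ)) * (1 - Real.cos (2 * π * ℓ)) ^ n * Real.cos ((k + 2*π) * ℓ))
          - (((n:ℝ)+1)/(2*(2*(n:ℝ)+1))) * (∫ ℓ in (0:ℝ)..1, (2 ^ n * (n.factorial : ℝ) ^ 2 / ((2 * n).factorial : ℝ)) * (1 - Real.cos (2 * π * ℓ)) ^ n * Real.cos ((k - 2*π) * ℓ)) := by
      rw [intervalIntegral.integral_sub (((hint k).const_mul _).sub ((hint (k + 2*π)).const_mul _))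
            ((hint (k - 2*π)).const_mul _),
          intervalIntegral.integral_sub ((hint k).const_mul _) ((hint (k + 2*π)).const_mul _),
          intervalIntegral.integral_const_mul, intervalIntegral.integral_const_mul,
          intervalIntegral.integral_const_mul]
    rw [intervalIntegral.integral_congr hcongr, split, I0, Ip, Im]
    have hPp : (∏ j ∈ Finset.Icc (-(n:ℤ)) (n:ℤ), (k / (2*π) + 1 + (j:ℝ))) = (k/(2*π) + (n:ℝ) + 1) * (∏ j ∈ Finset.Icc (-(n:ℤ)) (n:ℤ), (k / (2*π) + (j:ℝ))) / (k/(2*π) - (n:ℝ)) := by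
      rw [eq_div_iff hC]; linear_combination hp
    have hPm : (∏ j ∈ Finset.Icc (-(n:ℤ)) (n:ℤ), (k / (2*π) + -1 + (j:ℝ))) = (k/(2*π) - (n:ℝ) - 1) * (∏ j ∈ Finset.Icc (-(n:ℤ)) (n:ℤ), (k / (2*π) + (j:ℝ))) / (k/(2*π) + (n:ℝ)) := by
      rw [eq_div_iff hD]; linear_combination hm2
    rw [hPp, hPm, Nat.factorial_succ]
    push_cast
    rw [hQ]
    have h2n1 : (2*(n:ℝ)+1) ≠ 0 := by positivity
    have hn1 : ((n:ℝ)+1) ≠ 0 := by positivity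
    rw [pow_succ (-1:ℝ) n]
    generalize hgen : (∏ j ∈ Finset.Icc (-(n:ℤ)) (n:ℤ), (k / (2*π) + (j:ℝ))) = P at hP ⊢
    generalize (Real.sin k) = s
    generalize ((n.factorial : ℝ)) = F
    generalize ((-1:ℝ)^n) = E
    generalize hyy : k / (2*π) = y at hA hB hC hD ⊢
    clear hgen hyy I0 Ip Im hp hm2 hQ hPp hPm shift1 shift2 hcongr split hint hne hk hk0 hkp hkm ih
    have hB2 : y + ↑n + 1 ≠ 0 := by intro h; exact hB (by linarith)
    have hA2 : y - ↑n - 1 ≠ 0 := by intro h; exact hA (by linarith)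
    simp only [← mul_div_assoc]
    rw [div_div_eq_mul_div, div_div_eq_mul_div]
    field_simp [hA, hB, hC, hD, hP, hA2, hB2]
    ring


theorem re_fourier_phi_d (d : ℕ) (hd : 0 < d) (k : ℝ)
    (hk : ∀ m : ℤ, |m| ≤ (d : ℤ) → k ≠ 2 * π * m) :
    ∫ ℓ in (0:ℝ)..1,
        (2 ^ d * (d.factorial : ℝ) ^ 2 / ((2 * d).factorial : ℝ))
          * (1 - Real.cos (2 * π * ℓ)) ^ d * Real.cos (k * ℓ)
      = ((-1 : ℝ) ^ d * (d.factorial : ℝ) ^ 2 * Real.sin k)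
          / (2 * π * ∏ j ∈ Finset.Icc (-(d : ℤ)) (d : ℤ), (k / (2 * π) + (j : ℝ))) :=
  aux_phi d k hk
end

section
/- For all real k > 2πd, |Re(φ̂_d(k))| ≤ (d!)^2 / (2π (k/(2π) - d)^{2d+1}). -/
/-!
Since `1 - cos (2πℓ) = 2 sin² (πℓ)`, the integral is `C_d 2^d J_d(k)` with
`J_n(k) = ∫₀¹ sin (πℓ)^(2n) cos (kℓ) dℓ`. Integrating by parts twice (the boundary terms vanish
because `sin (πℓ)` does at `ℓ = 0, 1`) gives `((2π(n+1))² - k²) J_{n+1} = (2n+2)(2n+1) π² J_n`,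
whence `k ∏_{j=1}^{d} ((2πj)² - k²) J_d(k) = (2d)! π^(2d) sin k`. For `k > 2πd` every factor of
this product is at least `(k - 2πd)²` in absolute value, and `|sin k| ≤ 1`.
-/

open Real

noncomputable def sinPowCosIntegral (n : ℕ) (k : ℝ) : ℝ :=
  ∫ ℓ in (0:ℝ)..1, sin (π * ℓ) ^ (2 * n) * cos (k * ℓ)

lemma intervalIntegrable_sin_pow_mul_cos (n : ℕ) (k : ℝ) :
    IntervalIntegrable (fun ℓ => sin (π * ℓ) ^ (2 * n) * cos (k * ℓ)) MeasureTheory.volume 0 1 :=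
  (by fun_prop : Continuous _).intervalIntegrable 0 1

-- The boundary term of integrating `sin (π ℓ) ^ (2n+2) * cos (k ℓ)` by parts twice.
lemma hasDerivAt_sinPowCos_boundary (n : ℕ) (k x : ℝ) :
    HasDerivAt (fun ℓ => k * sin (π * ℓ) ^ (2 * n + 2) * sin (k * ℓ)
        + (2 * n + 2) * π * sin (π * ℓ) ^ (2 * n + 1) * cos (π * ℓ) * cos (k * ℓ))
      ((k ^ 2 - (2 * π * (n + 1)) ^ 2) * (sin (π * x) ^ (2 * (n + 1)) * cos (k * x))
        + (2 * n + 2) * (2 * n + 1) * π ^ 2 * (sin (π * x) ^ (2 * n) * cos (k * x))) x := by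
  have hsin (c : ℝ) : HasDerivAt (fun ℓ => sin (c * ℓ)) (cos (c * x) * c) x := by
    simpa using ((hasDerivAt_id x).const_mul c).sin
  have hcos (c : ℝ) : HasDerivAt (fun ℓ => cos (c * ℓ)) (-sin (c * x) * c) x := by
    simpa using ((hasDerivAt_id x).const_mul c).cos
  refine ((((hsin π).pow (2 * n + 2)).const_mul k).mul (hsin k) |>.add
    (((((hsin π).pow (2 * n + 1)).const_mul ((2 * n + 2) * π)).mul (hcos π)).mul
      (hcos k))).congr_deriv ?_
  simp only [Nat.add_sub_cancel, Pi.pow_apply, Pi.mul_apply]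
  push_cast
  linear_combination ((2 * n + 2) * (2 * n + 1) * π ^ 2 * sin (π * x) ^ (2 * n) * cos (k * x))
    * sin_sq_add_cos_sq (π * x)

lemma sinPowCosIntegral_succ (n : ℕ) (k : ℝ) :
    ((2 * π * (n + 1)) ^ 2 - k ^ 2) * sinPowCosIntegral (n + 1) k
      = (2 * n + 2) * (2 * n + 1) * π ^ 2 * sinPowCosIntegral n k := by
  have hbdry := intervalIntegral.integral_eq_sub_of_hasDerivAt
    (fun x _ => hasDerivAt_sinPowCos_boundary n k x)
    ((((intervalIntegrable_sin_pow_mul_cos (n + 1) k).const_mul _).add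
      ((intervalIntegrable_sin_pow_mul_cos n k).const_mul _)))
  rw [intervalIntegral.integral_add ((intervalIntegrable_sin_pow_mul_cos (n + 1) k).const_mul _)
      ((intervalIntegrable_sin_pow_mul_cos n k).const_mul _),
    intervalIntegral.integral_const_mul, intervalIntegral.integral_const_mul] at hbdry
  simp only [mul_one, mul_zero, sin_pi, sin_zero, ne_eq, Nat.add_eq_zero_iff, one_ne_zero,
    and_false, not_false_eq_true, zero_pow, zero_mul, add_zero, sub_zero] at hbdry
  unfold sinPowCosIntegral
  linear_combination -hbdry

lemma mul_sinPowCosIntegral_zero (k : ℝ) : k * sinPowCosIntegral 0 k = sin k := by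
  simp only [sinPowCosIntegral, mul_zero, pow_zero, one_mul]
  rw [intervalIntegral.mul_integral_comp_mul_left, integral_cos]
  simp

lemma sinPowCosIntegral_mul_prod (n : ℕ) (k : ℝ) :
    k * (∏ j ∈ Finset.range n, ((2 * π * (j + 1)) ^ 2 - k ^ 2)) * sinPowCosIntegral n k
      = (2 * n).factorial * π ^ (2 * n) * sin k := by
  induction n with
  | zero => simpa using mul_sinPowCosIntegral_zero k
  | succ n ih =>
    rw [Finset.prod_range_succ, show 2 * (n + 1) = 2 * n + 1 + 1 by ring,
      Nat.factorial_succ, Nat.factorial_succ]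
    push_cast
    linear_combination k * (∏ j ∈ Finset.range n, ((2 * π * (j + 1)) ^ 2 - k ^ 2))
      * sinPowCosIntegral_succ n k + (2 * n + 2) * (2 * n + 1) * π ^ 2 * ih

lemma sq_le_abs_sq_sub_sq {m c k : ℝ} (hm : 0 ≤ m) (hc : 0 ≤ c) (h : m + c ≤ k) :
    m ^ 2 ≤ |c ^ 2 - k ^ 2| := by
  rw [abs_sub_comm, abs_of_nonneg (by nlinarith)]
  nlinarith

lemma pow_le_abs_mul_prod {n : ℕ} {k : ℝ} (hk : 2 * π * n ≤ k) :
    (k - 2 * π * n) ^ (2 * n + 1)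
      ≤ |k * ∏ j ∈ Finset.range n, ((2 * π * (j + 1)) ^ 2 - k ^ 2)| := by
  have hm : 0 ≤ k - 2 * π * n := sub_nonneg.mpr hk
  have hfactor : ∀ j ∈ Finset.range n,
      (k - 2 * π * n) ^ 2 ≤ |(2 * π * (j + 1)) ^ 2 - k ^ 2| := by
    intro j hj
    have hjn : (j : ℝ) + 1 ≤ n := by exact_mod_cast Finset.mem_range.mp hj
    exact sq_le_abs_sq_sub_sq hm (by positivity) (by nlinarith [pi_pos])
  calc (k - 2 * π * n) ^ (2 * n + 1)
      = (k - 2 * π * n) * ∏ _j ∈ Finset.range n, (k - 2 * π * n) ^ 2 := by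
        rw [Finset.prod_const, Finset.card_range, ← pow_mul, pow_succ, mul_comm]
    _ ≤ |k| * ∏ j ∈ Finset.range n, |(2 * π * (j + 1)) ^ 2 - k ^ 2| := by
        gcongr
        · exact (sub_le_self _ (by positivity)).trans (le_abs_self k)
        · exact hfactor _ ‹_›
    _ = _ := by rw [abs_mul, Finset.abs_prod]

lemma abs_sinPowCosIntegral_le {n : ℕ} {k : ℝ} (hk : 2 * π * n < k) :
    |sinPowCosIntegral n k| ≤ (2 * n).factorial * π ^ (2 * n) / (k - 2 * π * n) ^ (2 * n + 1) := by
  have hpos : 0 < (k - 2 * π * n) ^ (2 * n + 1) := pow_pos (sub_pos.mpr hk) _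
  have hprod := pow_le_abs_mul_prod hk.le
  rw [le_div_iff₀ hpos]
  calc |sinPowCosIntegral n k| * (k - 2 * π * n) ^ (2 * n + 1)
      ≤ |sinPowCosIntegral n k| * |k * ∏ j ∈ Finset.range n, ((2 * π * (j + 1)) ^ 2 - k ^ 2)| :=
        mul_le_mul_of_nonneg_left hprod (abs_nonneg _)
    _ = (2 * n).factorial * π ^ (2 * n) * |sin k| := by
        rw [← abs_mul, mul_comm, sinPowCosIntegral_mul_prod, abs_mul, abs_of_nonneg (by positivity)]
    _ ≤ (2 * n).factorial * π ^ (2 * n) := mul_le_of_le_one_right (by positivity) (abs_sin_le_one k)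

lemma integral_one_sub_cos_pow_mul_cos (n : ℕ) (k : ℝ) :
    ∫ ℓ in (0:ℝ)..1, (1 - cos (2 * π * ℓ)) ^ n * cos (k * ℓ) = 2 ^ n * sinPowCosIntegral n k := by
  rw [sinPowCosIntegral, ← intervalIntegral.integral_const_mul]
  congr 1 with ℓ
  rw [mul_assoc 2 π, cos_two_mul, cos_sq', pow_mul]
  ring

theorem re_fourier_phi_d_bound_general (d : ℕ) (k : ℝ) (hk : k > 2 * π * d) :
    |∫ ℓ in (0:ℝ)..1,
        (2 ^ d * (d.factorial : ℝ) ^ 2 / ((2 * d).factorial : ℝ))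
          * (1 - Real.cos (2 * π * ℓ)) ^ d * Real.cos (k * ℓ)|
      ≤ (d.factorial : ℝ) ^ 2 / (2 * π * (k / (2 * π) - d) ^ (2 * d + 1)) := by
  have hrhs : (d.factorial : ℝ) ^ 2 / (2 * π * (k / (2 * π) - d) ^ (2 * d + 1))
      = 4 ^ d * d.factorial ^ 2 * π ^ (2 * d) / (k - 2 * π * d) ^ (2 * d + 1) := by
    rw [show k / (2 * π) - d = (k - 2 * π * d) / (2 * π) by field_simp, div_pow,
      show (4 : ℝ) ^ d = 2 ^ (2 * d) by rw [pow_mul]; norm_num]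
    field_simp
    ring
  simp_rw [mul_assoc (2 ^ d * _ / _ : ℝ)]
  rw [intervalIntegral.integral_const_mul, integral_one_sub_cos_pow_mul_cos, hrhs, abs_mul,
    abs_mul, abs_of_nonneg (by positivity), abs_of_nonneg (by positivity)]
  calc 2 ^ d * (d.factorial : ℝ) ^ 2 / (2 * d).factorial * (2 ^ d * |sinPowCosIntegral d k|)
      ≤ 2 ^ d * (d.factorial : ℝ) ^ 2 / (2 * d).factorial
          * (2 ^ d * ((2 * d).factorial * π ^ (2 * d) / (k - 2 * π * d) ^ (2 * d + 1))) := by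
        gcongr
        exact abs_sinPowCosIntegral_le hk
    _ = _ := by
        rw [show (4 : ℝ) ^ d = 2 ^ d * 2 ^ d by rw [← mul_pow]; norm_num]
        field_simp

theorem re_fourier_phi_d_bound (d : ℕ) (hd : 0 < d) (k : ℝ) (hk : k > 2 * π * d) :
    |∫ ℓ in (0:ℝ)..1,
        (2 ^ d * (d.factorial : ℝ) ^ 2 / ((2 * d).factorial : ℝ))
          * (1 - Real.cos (2 * π * ℓ)) ^ d * Real.cos (k * ℓ)|
      ≤ (d.factorial : ℝ) ^ 2 / (2 * π * (k / (2 * π) - d) ^ (2 * d + 1)) :=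
  re_fourier_phi_d_bound_general d k hk
end

section
/- Let ρ > 0 and ε̄ ∈ (0,1) with e^{1/6}ρ/ε̄ > 1. Define β(α) = M + ρα(1 + (1/e)(e^{1/6}ρ/ε̄)^{1/(2α)}) for α > 0. Then β is differentiable on (0,∞), its derivative vanishes exactly at α* = ln(e^{1/6}ρ/ε̄) / (2(1 + W(1))), where W(1) is the unique positive solution of w e^w = 1, and β is strictly decreasing on (0,α*) and strictly increasing on (α*,∞). -/
/-!
With `K = log c / 2`, where `c = e^{1/6} ρ / ε'`, one has
`β α = M + ρ α + (ρ / e) α e^{K/α}`, so `β' α = ρ (1 - u e^u)` with `u = K/α - 1`.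
As `u` decreases strictly in `α` and `t ↦ t e^t` increases strictly on `[0, ∞)` (and is
`≤ 0` below), `β'` changes sign exactly where `u = W(1)`, i.e. at `α = K / (1 + W(1))`.
-/

open Real Set

theorem mul_exp_lt_mul_exp {s t : ℝ} (hs : 0 < s) (hts : t < s) : t * exp t < s * exp s := by
  rcases le_or_gt t 0 with ht | ht
  · exact (mul_nonpos_of_nonpos_of_nonneg ht (exp_pos t).le).trans_lt (by positivity)
  · exact mul_lt_mul hts (exp_le_exp.mpr hts.le) (exp_pos t) hs.le

theorem hasDerivAt_mul_exp_div (K : ℝ) {x : ℝ} (hx : x ≠ 0) :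
    HasDerivAt (fun y => y * exp (K / y)) ((1 - K / x) * exp (K / x)) x := by
  refine ((hasDerivAt_id x).mul ((hasDerivAt_inv hx).const_mul K).exp).congr_deriv ?_
  simp only [id]
  field_simp
  ring

theorem rpow_one_div_two_mul_eq_exp {c : ℝ} (hc : 0 < c) (α : ℝ) :
    c ^ (1 / (2 * α)) = exp (log c / 2 / α) := by
  rw [rpow_def_of_pos hc]
  ring_nf

theorem hasDerivAt_beta (M ρ : ℝ) {c : ℝ} (hc : 0 < c) {α : ℝ} (hα : α ≠ 0) :
    HasDerivAt (fun α => M + ρ * α * (1 + 1 / exp 1 * c ^ (1 / (2 * α))))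
      (ρ * (1 - (log c / 2 / α - 1) * exp (log c / 2 / α - 1))) α := by
  have hform : (fun α => M + ρ * α * (1 + 1 / exp 1 * c ^ (1 / (2 * α)))) =
      fun x => M + ρ * x + ρ / exp 1 * (x * exp (log c / 2 / x)) := by
    funext x
    rw [rpow_one_div_two_mul_eq_exp hc]
    ring
  rw [hform]
  refine ((((hasDerivAt_id α).const_mul ρ).const_add M).add
    ((hasDerivAt_mul_exp_div (log c / 2) hα).const_mul (ρ / exp 1))).congr_deriv ?_
  rw [exp_sub]
  field_simp
  ring

section Sign

variable {K W α : ℝ}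

theorem one_sub_mul_exp_neg_of_lt_div (hW : 0 < W) (hWeq : W * exp W = 1) (hα : 0 < α)
    (h : α < K / (1 + W)) : 1 - (K / α - 1) * exp (K / α - 1) < 0 := by
  have hu : W < K / α - 1 := by
    rw [lt_div_iff₀ (by linarith)] at h
    rw [lt_sub_iff_add_lt, lt_div_iff₀ hα]
    linarith
  linarith [mul_exp_lt_mul_exp (hW.trans hu) hu]

theorem one_sub_mul_exp_pos_of_div_lt (hW : 0 < W) (hWeq : W * exp W = 1) (hα : 0 < α)
    (h : K / (1 + W) < α) : 0 < 1 - (K / α - 1) * exp (K / α - 1) := by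
  have hu : K / α - 1 < W := by
    rw [div_lt_iff₀ (by linarith)] at h
    rw [sub_lt_iff_lt_add, div_lt_iff₀ hα]
    linarith
  linarith [mul_exp_lt_mul_exp hW hu]

theorem div_div_one_add_sub_one (hK : K ≠ 0) : K / (K / (1 + W)) - 1 = W := by
  field_simp
  ring

end Sign

theorem beta_monotonicity_general
    (M : ℕ) (ρ ε' : ℝ) (hρ : 0 < ρ)
    (hbig : Real.exp (1/6) * ρ / ε' > 1)
    (W : ℝ) (hW : 0 < W) (hWeq : W * Real.exp W = 1)
    (β : ℝ → ℝ)
    (hβ : ∀ α : ℝ, β α = M + ρ * α * (1 + (1 / Real.exp 1)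
            * (Real.exp (1/6) * ρ / ε') ^ (1 / (2 * α))))
    (αstar : ℝ) (hαstar : αstar = Real.log (Real.exp (1/6) * ρ / ε') / (2 * (1 + W))) :
    (∀ α : ℝ, 0 < α → DifferentiableAt ℝ β α) ∧
    (∀ α : ℝ, 0 < α → (deriv β α = 0 ↔ α = αstar)) ∧
    StrictAntiOn β (Set.Ioo 0 αstar) ∧
    StrictMonoOn β (Set.Ioi αstar) := by
  set K := log (exp (1/6) * ρ / ε') / 2
  have hK : 0 < K := half_pos (log_pos hbig)
  have hαstar' : αstar = K / (1 + W) := by rw [hαstar, div_mul_eq_div_div]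
  have hαstar_pos : 0 < αstar := by rw [hαstar']; positivity
  have hderiv : ∀ α, 0 < α → HasDerivAt β (ρ * (1 - (K / α - 1) * exp (K / α - 1))) α := by
    intro α hα
    rw [show β = _ from funext hβ]
    exact hasDerivAt_beta M ρ (one_pos.trans hbig) hα.ne'
  have hneg : ∀ α, 0 < α → α < αstar → deriv β α < 0 := fun α hα h =>
    (hderiv α hα).deriv ▸ mul_neg_of_pos_of_neg hρ
      (one_sub_mul_exp_neg_of_lt_div hW hWeq hα (hαstar' ▸ h))
  have hpos : ∀ α, αstar < α → 0 < deriv β α := fun α h =>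
    have hα := hαstar_pos.trans h
    (hderiv α hα).deriv ▸ mul_pos hρ (one_sub_mul_exp_pos_of_div_lt hW hWeq hα (hαstar' ▸ h))
  have hcont : ContinuousOn β (Ioi 0) := fun α hα => (hderiv α hα).continuousAt.continuousWithinAt
  refine ⟨fun α hα => (hderiv α hα).differentiableAt, fun α hα => ⟨fun h0 => ?_, ?_⟩,
    strictAntiOn_of_deriv_neg (convex_Ioo 0 αstar) (hcont.mono Ioo_subset_Ioi_self)
      (by simpa using hneg),
    strictMonoOn_of_deriv_pos (convex_Ioi αstar) (hcont.mono (Ioi_subset_Ioi hαstar_pos.le))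
      (by simpa using hpos)⟩
  · rcases lt_trichotomy α αstar with h | h | h
    exacts [absurd h0 (hneg α hα h).ne, h, absurd h0 (hpos α h).ne']
  · rintro rfl
    rw [(hderiv _ hα).deriv, hαstar', div_div_one_add_sub_one hK.ne', hWeq]
    ring

theorem beta_monotonicity
    (M : ℕ) (ρ ε' : ℝ) (hρ : 0 < ρ) (hε : ε' ∈ Set.Ioo (0:ℝ) 1)
    (hbig : Real.exp (1/6) * ρ / ε' > 1)
    (W : ℝ) (hW : 0 < W) (hWeq : W * Real.exp W = 1)
    (β : ℝ → ℝ)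
    (hβ : ∀ α : ℝ, β α = M + ρ * α * (1 + (1 / Real.exp 1)
            * (Real.exp (1/6) * ρ / ε') ^ (1 / (2 * α))))
    (αstar : ℝ) (hαstar : αstar = Real.log (Real.exp (1/6) * ρ / ε') / (2 * (1 + W))) :
    (∀ α : ℝ, 0 < α → DifferentiableAt ℝ β α) ∧
    (∀ α : ℝ, 0 < α → (deriv β α = 0 ↔ α = αstar)) ∧
    StrictAntiOn β (Set.Ioo 0 αstar) ∧
    StrictMonoOn β (Set.Ioi αstar) :=
  beta_monotonicity_general M ρ ε' hρ hbig W hW hWeq β hβ αstar hαstar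
end
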